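/- Let G be a group and H ≤ G a finite subgroup such that every h ∈ H has finite index centralizer [G : C_G(h)] < ∞. Then the function i_G : G × H → ℂ given by i_G(g,h) = [G : C_G(h)]^{-1} if g is conjugate to h in G and 0 otherwise, is a function of positive type on G × H. -/

import Mathlib

/-!
Let `N` be the intersection of the centralizers `C_G(h)`, `h ∈ H`; it has finite index. The cosets
`gN` with `g h g⁻¹ = x` are empty unless `x ~ h`, and otherwise make up one coset of `C_G(h)`, i.e.
`[C_G(h) : N]` cosets of `N`. Hence `i_G = [G : N]⁻¹ ∑_{gN} d_g` with `d_g (x, h) = [x = g h g⁻¹]`,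
the indicator of the stabilizer of `g` for the action `(x, h) • y = x y h⁻¹` of `G × H` on `G`.
The indicator of a subgroup `S` is of positive type: its quadratic form is the sum, over the cosets
`kS`, of `|∑_{g_i ∈ kS} c_i|²`.
-/

open scoped ComplexOrder

/-- A function `φ : G → ℂ` is of positive type if for every finite list of
group elements the matrix `(φ (g i⁻¹ * g j))` is positive semidefinite. -/
def IsPositiveType {G : Type*} [Group G] (φ : G → ℂ) : Prop :=
  ∀ (n : ℕ) (g : Fin n → G) (c : Fin n → ℂ),
    0 ≤ ∑ i : Fin n, ∑ j : Fin n, (starRingEnd ℂ) (c i) * c j * φ ((g i)⁻¹ * g j)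

open Finset

theorem sum_star_mul_ite_eq_nonneg {ι α : Type*} [Fintype ι] [DecidableEq α] (v : ι → α)
    (c : ι → ℂ) :
    0 ≤ ∑ i, ∑ j, (starRingEnd ℂ) (c i) * c j * (if v i = v j then 1 else 0) := by
  set s : α → ℂ := fun a => ∑ i with v i = a, c i
  have hrow : ∀ i, ∑ j, (starRingEnd ℂ) (c i) * c j * (if v i = v j then 1 else 0)
      = (starRingEnd ℂ) (c i) * s (v i) := fun i => by
    simp only [s, mul_ite, mul_one, mul_zero, sum_ite, sum_const_zero, add_zero, mul_sum, eq_comm]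
  calc (0 : ℂ) ≤ ∑ a ∈ univ.image v, (starRingEnd ℂ) (s a) * s a :=
        sum_nonneg fun a _ => star_mul_self_nonneg (s a)
    _ = ∑ a ∈ univ.image v, ∑ i with v i = a, (starRingEnd ℂ) (c i) * s (v i) := by
        refine sum_congr rfl fun a _ => ?_
        rw [map_sum, sum_mul]
        exact sum_congr rfl fun i hi => by rw [(mem_filter.mp hi).2]
    _ = _ := by
        rw [sum_fiberwise_of_maps_to fun i _ => mem_image_of_mem v (mem_univ i)]
        exact sum_congr rfl fun i _ => (hrow i).symm

namespace IsPositiveType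

variable {K : Type*} [Group K]

theorem sum {ι : Type*} (s : Finset ι) {φ : ι → K → ℂ} (hφ : ∀ i ∈ s, IsPositiveType (φ i)) :
    IsPositiveType fun k => ∑ i ∈ s, φ i k := by
  intro n g c
  simp_rw [mul_sum]
  rw [sum_congr rfl fun i _ => sum_comm, sum_comm]
  exact sum_nonneg fun i hi => hφ i hi n g c

theorem const_mul {φ : K → ℂ} (hφ : IsPositiveType φ) {a : ℂ} (ha : 0 ≤ a) :
    IsPositiveType fun k => a * φ k := by
  intro n g c
  have hpull : ∀ i j, (starRingEnd ℂ) (c i) * c j * (a * φ ((g i)⁻¹ * g j))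
      = a * ((starRingEnd ℂ) (c i) * c j * φ ((g i)⁻¹ * g j)) := fun _ _ => by ring
  simp_rw [hpull, ← mul_sum]
  exact mul_nonneg ha (hφ n g c)

end IsPositiveType

theorem isPositiveType_ite_mem {K : Type*} [Group K] (S : Subgroup K) [DecidablePred (· ∈ S)] :
    IsPositiveType fun k => if k ∈ S then 1 else 0 := by
  classical
  intro n g c
  simpa only [← QuotientGroup.eq] using
    sum_star_mul_ite_eq_nonneg (fun i => (g i : K ⧸ S)) c

open Subgroup

theorem conj_eq_conj_iff_mk_eq {G : Type*} [Group G] {a b h : G} :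
    a * h * a⁻¹ = b * h * b⁻¹ ↔ (a : G ⧸ centralizer {h}) = b := by
  rw [QuotientGroup.eq, mem_centralizer_singleton_iff]
  constructor <;> intro e
  · calc a⁻¹ * b * h = a⁻¹ * (b * h * b⁻¹) * b := by group
      _ = h * (a⁻¹ * b) := by rw [← e]; group
  · calc a * h * a⁻¹ = a * (h * (a⁻¹ * b)) * b⁻¹ := by group
      _ = b * h * b⁻¹ := by rw [← e]; group

theorem sum_quotient_out_eq_relIndex_smul {G M : Type*} [Group G] [AddCommMonoid M]
    {N C : Subgroup G} (hle : N ≤ C) [Fintype (G ⧸ N)] [Fintype (G ⧸ C)] (F : G → M)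
    (hF : ∀ a b : G, (a : G ⧸ C) = b → F a = F b) :
    ∑ q : G ⧸ N, F q.out = N.relIndex C • ∑ r : G ⧸ C, F r.out := by
  let e := quotientEquivProdOfLE hle
  have : N.FiniteIndex := finiteIndex_of_finite_quotient
  have : Fintype (C ⧸ N.subgroupOf C) := Fintype.ofFinite _
  have hproj : ∀ q : G ⧸ N, (q.out : G ⧸ C) = (e q).1 := fun q => by
    conv_rhs => rw [← q.out_eq']
    rfl
  calc ∑ q : G ⧸ N, F q.out = ∑ q : G ⧸ N, F (e q).1.out :=
        sum_congr rfl fun q _ => hF _ _ (by rw [hproj, QuotientGroup.out_eq'])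
    _ = ∑ p : (G ⧸ C) × (C ⧸ N.subgroupOf C), F p.1.out := e.sum_comp fun p => F p.1.out
    _ = N.relIndex C • ∑ r : G ⧸ C, F r.out := by
        rw [Fintype.sum_prod_type, smul_sum]
        simp only [sum_const, card_univ, relIndex, index, Nat.card_eq_fintype_card]

open scoped Classical in
theorem sum_quotient_centralizer_ite_conj_eq {G M : Type*} [Group G] [AddCommMonoidWithOne M]
    (h x : G) [Fintype (G ⧸ centralizer {h})] :
    ∑ r : G ⧸ centralizer {h}, (if r.out * h * r.out⁻¹ = x then 1 else 0 : M)
      = if IsConj x h then 1 else 0 := by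
  split_ifs with hx
  · obtain ⟨g, rfl⟩ := isConj_iff.mp hx.symm
    simp_rw [conj_eq_conj_iff_mk_eq, QuotientGroup.out_eq']
    simp
  · refine sum_eq_zero fun r _ => if_neg fun e => hx ?_
    exact (isConj_iff.mpr ⟨r.out, e⟩).symm

open scoped Classical in
theorem inv_index_mul_sum_ite_conj_eq {G : Type*} [Group G] {N : Subgroup G} [Fintype (G ⧸ N)]
    {h : G} (hN : N ≤ centralizer {h}) (x : G) :
    (N.index : ℂ)⁻¹ * ∑ q : G ⧸ N, (if q.out * h * q.out⁻¹ = x then 1 else 0)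
      = if IsConj x h then ((centralizer {h}).index : ℂ)⁻¹ else 0 := by
  have : N.FiniteIndex := finiteIndex_of_finite_quotient
  have := finiteIndex_of_le hN
  have : Fintype (G ⧸ centralizer {h}) := Fintype.ofFinite _
  rw [sum_quotient_out_eq_relIndex_smul hN (fun g => if g * h * g⁻¹ = x then 1 else 0)
      fun a b hab => by rw [conj_eq_conj_iff_mk_eq.mpr hab],
    sum_quotient_centralizer_ite_conj_eq, ← relIndex_mul_index hN]
  have hrel : (N.relIndex (centralizer {h}) : ℂ) ≠ 0 :=
    Nat.cast_ne_zero.mpr FiniteIndex.index_ne_zero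
  split_ifs <;> simp [hrel]

open scoped Classical in
theorem isPositiveType_ite_conj_eq {G : Type*} [Group G] (H : Subgroup G) (g : G) :
    IsPositiveType fun p : G × H => if g * p.2 * g⁻¹ = p.1 then 1 else 0 := by
  convert isPositiveType_ite_mem
    ((((MulAut.conj g).toMonoidHom.comp H.subtype).graph).comap (MulEquiv.prodComm).toMonoidHom)
    using 3 with p
  simp [MonoidHom.mem_graph]

open scoped Classical in
theorem stmt11 (G : Type*) [Group G] (H : Subgroup G) [Finite H]
    (hfin : ∀ h : H, (Subgroup.centralizer {(h : G)}).FiniteIndex) :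
    IsPositiveType (fun p : G × H =>
      if IsConj p.1 (p.2 : G)
        then ((Subgroup.centralizer {(p.2 : G)}).index : ℂ)⁻¹ else 0) := by
  set N := ⨅ h : H, centralizer {(h : G)}
  have : N.FiniteIndex := finiteIndex_iInf hfin
  have : Fintype (G ⧸ N) := Fintype.ofFinite _
  have hφ : ∀ p : G × H,
      (if IsConj p.1 (p.2 : G) then ((centralizer {(p.2 : G)}).index : ℂ)⁻¹ else 0)
      = (N.index : ℂ)⁻¹ * ∑ q : G ⧸ N, (if q.out * p.2 * q.out⁻¹ = p.1 then 1 else 0) :=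
    fun p => (inv_index_mul_sum_ite_conj_eq (iInf_le _ p.2) p.1).symm
  simp_rw [hφ]
  refine IsPositiveType.const_mul ?_ (by positivity)
  exact IsPositiveType.sum _ fun q _ => isPositiveType_ite_conj_eq H q.out
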